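/- arXiv:0806.3160 — 2 statements merged into one kernel-verified Lean document; each statement's English description precedes it below -/
import Mathlib

section
/- Let δ, α, β be real numbers with −π/2 < δ < α ≤ β < π/2. Then ∫_α^β log(tan(φ) − tan(δ)) dφ = (1/2)·( Cl₂(2α − 2δ) − Cl₂(2β − 2δ) + Cl₂(π − 2α) − Cl₂(π − 2β) ) − (β − α)·log(cos(δ)). -/
/-!
Since tan φ - tan δ = sin (φ - δ) / (cos φ cos δ) and cos φ = sin (π/2 - φ), the integral splits
into two integrals of log (2 sin t) over subintervals of (0, π). There
-log (2 sin t) = ∑ cos (2nt) / n, the real part of -log (1 - z) = ∑ zⁿ / n at z = e^{2it}: on the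
unit circle this series converges by Dirichlet's test, and Abel's limit theorem identifies its sum.
Abel summation bounds its partial sums by 1 / |sin t|, so dominated convergence allows integrating
termwise, and the antiderivatives sin (2nt) / (2n²) sum to Clausen values.
-/

open Real

/-- The Clausen function `Cl₂(x) = ∑_{n=1}^∞ sin(n x)/n²`. -/
noncomputable def Cl2 (x : ℝ) : ℝ := ∑' n : ℕ, Real.sin (((n : ℝ) + 1) * x) / ((n : ℝ) + 1) ^ 2

open Filter Finset Topology MeasureTheory

theorem Antitone.norm_sum_range_smul_le {E : Type*} [SeminormedAddCommGroup E] [NormedSpace ℝ E]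
    {f : ℕ → ℝ} {z : ℕ → E} {b : ℝ} (hf : Antitone f) (hf0 : ∀ n, 0 ≤ f n)
    (hz : ∀ n, ‖∑ i ∈ range n, z i‖ ≤ b) (n : ℕ) :
    ‖∑ i ∈ range n, f i • z i‖ ≤ f 0 * b := by
  rw [sum_range_by_parts]
  have hdiff : ∀ i, ‖(f (i + 1) - f i) • ∑ j ∈ range (i + 1), z j‖ ≤ (f i - f (i + 1)) * b :=
    fun i => by
      rw [norm_smul, Real.norm_eq_abs, abs_sub_comm, abs_of_nonneg (sub_nonneg.2 (hf i.le_succ))]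
      exact mul_le_mul_of_nonneg_left (hz _) (sub_nonneg.2 (hf i.le_succ))
  calc _ ≤ f (n - 1) * b + ∑ i ∈ range (n - 1), (f i - f (i + 1)) * b := by
        refine (norm_sub_le _ _).trans
          (add_le_add ?_ ((norm_sum_le _ _).trans (sum_le_sum fun i _ => hdiff i)))
        rw [norm_smul, Real.norm_eq_abs, abs_of_nonneg (hf0 _)]
        exact mul_le_mul_of_nonneg_left (hz n) (hf0 _)
    _ = f 0 * b := by rw [← sum_mul, sum_range_sub' f]; ring

theorem antitone_one_div_natCast_add_one : Antitone fun n : ℕ => 1 / ((n : ℝ) + 1) :=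
  fun _ _ hmn => one_div_le_one_div_of_le (by positivity) (by gcongr)

namespace Complex

theorem norm_sum_range_pow_succ_le {z : ℂ} (hz : ‖z‖ ≤ 1) (h1 : z ≠ 1) (n : ℕ) :
    ‖∑ i ∈ range n, z ^ (i + 1)‖ ≤ 2 / ‖1 - z‖ := by
  have hgeom : ∑ i ∈ range n, z ^ (i + 1) = z * (z ^ n - 1) / (z - 1) := by
    simp_rw [pow_succ', ← mul_sum, geom_sum_eq h1, mul_div_assoc]
  rw [hgeom, norm_div, norm_mul, norm_sub_rev z 1]
  gcongr
  calc ‖z‖ * ‖z ^ n - 1‖ ≤ 1 * (1 + 1) := by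
        gcongr
        refine (norm_sub_le _ _).trans ?_
        rw [norm_pow, norm_one]
        gcongr
        exact pow_le_one₀ (norm_nonneg _) hz
    _ = 2 := by norm_num

theorem norm_sum_range_pow_succ_div_le {z : ℂ} (hz : ‖z‖ ≤ 1) (h1 : z ≠ 1) (n : ℕ) :
    ‖∑ i ∈ range n, z ^ (i + 1) / (i + 1)‖ ≤ 2 / ‖1 - z‖ := by
  have := antitone_one_div_natCast_add_one.norm_sum_range_smul_le (fun i => by positivity)
    (norm_sum_range_pow_succ_le hz h1) n
  simp only [Nat.cast_zero, zero_add, div_one, one_mul, real_smul] at this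
  refine (le_of_eq (congrArg _ (sum_congr rfl fun i _ => ?_))).trans this
  push_cast
  ring

theorem one_sub_mem_slitPlane {z : ℂ} (hz : ‖z‖ ≤ 1) (h1 : z ≠ 1) : 1 - z ∈ slitPlane := by
  refine mem_slitPlane_iff.2 (Or.inl ?_)
  rw [sub_re, one_re, sub_pos]
  by_contra! hre
  have hnorm : |z.re| = ‖z‖ := by
    rw [abs_of_nonneg (by linarith)]; exact le_antisymm (re_le_norm z) (hz.trans hre)
  exact h1 (ext (by rw [one_re]; linarith [re_le_norm z]) (abs_re_eq_norm.1 hnorm))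

theorem tendsto_sum_range_pow_succ_div {z : ℂ} (hz : ‖z‖ ≤ 1) (h1 : z ≠ 1) :
    Tendsto (fun n => ∑ i ∈ range n, z ^ (i + 1) / (i + 1)) atTop (𝓝 (-log (1 - z))) := by
  obtain ⟨l, hl⟩ : ∃ l, Tendsto (fun n => ∑ i ∈ range n, z ^ (i + 1) / (i + 1)) atTop (𝓝 l) := by
    refine cauchySeq_tendsto_of_complete ?_
    convert antitone_one_div_natCast_add_one.cauchySeq_series_mul_of_tendsto_zero_of_bounded
      tendsto_one_div_add_atTop_nhds_zero_nat (norm_sum_range_pow_succ_le hz h1) using 3 with n i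
    rw [real_smul]
    push_cast
    ring
  -- the extra term `z ^ 0 / 0` is `0`
  have hl₀ : Tendsto (fun n => ∑ i ∈ range n, z ^ i / i) atTop (𝓝 l) := by
    rw [← tendsto_add_atTop_iff_nat 1]
    simpa [sum_range_succ'] using hl
  have habel := tendsto_tsum_powerSeries_nhdsWithin_lt hl₀
  rw [tendsto_map'_iff] at habel
  have hlog : Tendsto (fun x : ℝ => ∑' n : ℕ, z ^ n / n * (x : ℂ) ^ n) (𝓝[<] 1)
      (𝓝 (-log (1 - z))) := by
    have hcont : ContinuousAt (fun x : ℝ => -log (1 - x * z)) 1 :=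
      ((continuousAt_clog (by simpa using one_sub_mem_slitPlane hz h1)).comp
        (by fun_prop)).neg
    have hlim := hcont.tendsto.mono_left (nhdsWithin_le_nhds (s := Set.Iio 1))
    rw [ofReal_one, one_mul] at hlim
    refine hlim.congr' ?_
    filter_upwards [Ioo_mem_nhdsLT zero_lt_one] with x hx
    have hxz : ‖(x : ℂ) * z‖ < 1 := by
      rw [norm_mul, norm_real, Real.norm_of_nonneg hx.1.le]
      exact mul_lt_one_of_nonneg_of_lt_one_left hx.1.le hx.2 hz
    rw [← (hasSum_taylorSeries_neg_log hxz).tsum_eq]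
    exact tsum_congr fun n => by ring
  rwa [tendsto_nhds_unique habel hlog] at hl

end Complex

namespace Real

theorem norm_one_sub_exp_two_mul_I (t : ℝ) :
    ‖1 - Complex.exp (↑(2 * t) * Complex.I)‖ = 2 * |sin t| := by
  rw [norm_sub_rev, mul_comm, Complex.norm_exp_I_mul_ofReal_sub_one, norm_mul, norm_two,
    norm_eq_abs, mul_div_cancel_left₀ t two_ne_zero]

theorem exp_two_mul_I_ne_one {t : ℝ} (ht : sin t ≠ 0) :
    Complex.exp (↑(2 * t) * Complex.I) ≠ 1 := by
  intro h
  have := norm_one_sub_exp_two_mul_I t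
  rw [h, sub_self, norm_zero] at this
  exact ht (abs_eq_zero.1 (by linarith [abs_nonneg (sin t)]))

theorem sum_range_cos_div_eq_re (t : ℝ) (n : ℕ) :
    ∑ i ∈ range n, cos (2 * (i + 1) * t) / (i + 1) =
      (∑ i ∈ range n, Complex.exp (↑(2 * t) * Complex.I) ^ (i + 1) / (i + 1)).re := by
  rw [Complex.re_sum]
  refine sum_congr rfl fun i _ => ?_
  rw [← Complex.exp_nat_mul, show ((i + 1 : ℕ) : ℂ) * (↑(2 * t) * Complex.I)
    = ↑(2 * (i + 1) * t) * Complex.I by push_cast; ring,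
    show (i : ℂ) + 1 = ((i + 1 : ℝ) : ℂ) by push_cast; rfl,
    Complex.div_ofReal_re, Complex.exp_ofReal_mul_I_re]

theorem abs_sum_range_cos_div_le {t : ℝ} (ht : sin t ≠ 0) (n : ℕ) :
    |∑ i ∈ range n, cos (2 * (i + 1) * t) / (i + 1)| ≤ 1 / |sin t| := by
  rw [sum_range_cos_div_eq_re]
  refine (Complex.abs_re_le_norm _).trans ?_
  refine (Complex.norm_sum_range_pow_succ_div_le (Complex.norm_exp_ofReal_mul_I _).le
    (exp_two_mul_I_ne_one ht) n).trans_eq ?_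
  rw [norm_one_sub_exp_two_mul_I]
  field_simp

theorem tendsto_sum_range_cos_div {t : ℝ} (ht : sin t ≠ 0) :
    Tendsto (fun n => ∑ i ∈ range n, cos (2 * (i + 1) * t) / (i + 1)) atTop
      (𝓝 (-log (2 * sin t))) := by
  have h := (Complex.continuous_re.tendsto _).comp (Complex.tendsto_sum_range_pow_succ_div
    (Complex.norm_exp_ofReal_mul_I (2 * t)).le (exp_two_mul_I_ne_one ht))
  rw [Complex.neg_re, Complex.log_re, norm_one_sub_exp_two_mul_I,
    show 2 * |sin t| = |2 * sin t| by rw [abs_mul, abs_two], log_abs] at h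
  simpa only [Function.comp_def, ← sum_range_cos_div_eq_re] using h

theorem log_tan_sub_tan {δ φ : ℝ} (hδ : cos δ ≠ 0) (hφ : cos φ ≠ 0) (hφδ : sin (φ - δ) ≠ 0) :
    log (tan φ - tan δ) = log (2 * sin (φ - δ)) - log (2 * sin (π / 2 - φ)) - log (cos δ) := by
  have hquot : tan φ - tan δ = sin (φ - δ) / (cos φ * cos δ) := by
    rw [tan_eq_sin_div_cos, tan_eq_sin_div_cos, sin_sub]
    field_simp
  rw [hquot, sin_pi_div_two_sub, log_div hφδ (mul_ne_zero hφ hδ), log_mul hφ hδ,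
    log_mul two_ne_zero hφδ, log_mul two_ne_zero hφ]
  ring

end Real

theorem hasSum_Cl2 (x : ℝ) :
    HasSum (fun n : ℕ => sin ((n + 1) * x) / (n + 1) ^ 2) (Cl2 x) := by
  refine (Summable.of_norm_bounded ((summable_nat_add_iff 1).2
    (summable_one_div_nat_pow.2 one_lt_two)) fun n => ?_).hasSum
  rw [norm_div, norm_pow, norm_eq_abs, norm_of_nonneg (by positivity : (0 : ℝ) ≤ n + 1)]
  push_cast
  gcongr
  exact abs_sin_le_one _

theorem integral_sum_range_cos_div (a b : ℝ) (n : ℕ) :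
    ∫ t in a..b, ∑ i ∈ range n, cos (2 * (i + 1) * t) / (i + 1) =
      ∑ i ∈ range n, (sin ((i + 1) * (2 * b)) / (i + 1) ^ 2
        - sin ((i + 1) * (2 * a)) / (i + 1) ^ 2) / 2 := by
  rw [intervalIntegral.integral_finsetSum fun i _ =>
    Continuous.intervalIntegrable (by fun_prop) _ _]
  refine sum_congr rfl fun i _ => ?_
  rw [intervalIntegral.integral_div, intervalIntegral.integral_comp_mul_left (fun t => cos t)
    (by positivity), integral_cos, smul_eq_mul, mul_comm (2 : ℝ) b, mul_comm (2 : ℝ) a]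
  field_simp

theorem intervalIntegrable_log_two_mul_sin {a b : ℝ} (h : ∀ t ∈ Set.uIcc a b, sin t ≠ 0) :
    IntervalIntegrable (fun t => log (2 * sin t)) volume a b :=
  ContinuousOn.intervalIntegrable <| (continuous_const.mul continuous_sin).continuousOn.log
    fun t ht => mul_ne_zero two_ne_zero (h t ht)

theorem integral_log_two_mul_sin {a b : ℝ} (h : ∀ t ∈ Set.uIcc a b, sin t ≠ 0) :
    ∫ t in a..b, log (2 * sin t) = (Cl2 (2 * a) - Cl2 (2 * b)) / 2 := by
  have hdct : Tendsto (fun n => ∫ t in a..b, ∑ i ∈ range n, cos (2 * (i + 1) * t) / (i + 1))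
      atTop (𝓝 (∫ t in a..b, -log (2 * sin t))) := by
    refine intervalIntegral.tendsto_integral_filter_of_dominated_convergence
      (fun t => 1 / |sin t|)
      (Eventually.of_forall fun n => (Continuous.aestronglyMeasurable (by fun_prop)))
      (Eventually.of_forall fun n => Eventually.of_forall fun t ht =>
        abs_sum_range_cos_div_le (h t (Set.uIoc_subset_uIcc ht)) n)
      (ContinuousOn.intervalIntegrable ?_)
      (Eventually.of_forall fun t ht => tendsto_sum_range_cos_div (h t (Set.uIoc_subset_uIcc ht)))
    exact continuousOn_const.div continuous_sin.continuousOn.abs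
      fun t ht => abs_ne_zero.2 (h t ht)
  have hseries := (((hasSum_Cl2 (2 * b)).sub (hasSum_Cl2 (2 * a))).div_const 2).tendsto_sum_nat
  simp_rw [← integral_sum_range_cos_div a b] at hseries
  have hlim := tendsto_nhds_unique hdct hseries
  rw [intervalIntegral.integral_neg] at hlim
  linarith

theorem stmt6 (δ α β : ℝ) (hδ : -(π / 2) < δ) (hδα : δ < α) (hαβ : α ≤ β) (hβ : β < π / 2) :
    ∫ φ in α..β, Real.log (Real.tan φ - Real.tan δ) =
      (1 / 2) * (Cl2 (2 * α - 2 * δ) - Cl2 (2 * β - 2 * δ) + Cl2 (π - 2 * α) - Cl2 (π - 2 * β))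
        - (β - α) * Real.log (Real.cos δ) := by
  have hsin {a b : ℝ} (ha : a ∈ Set.Ioo 0 π) (hb : b ∈ Set.Ioo 0 π) :
      ∀ t ∈ Set.uIcc a b, sin t ≠ 0 := fun t ht =>
    (sin_pos_of_mem_Ioo (Set.ordConnected_Ioo.uIcc_subset ha hb ht)).ne'
  have hleft := hsin (a := α - δ) (b := β - δ) ⟨by linarith, by linarith⟩ ⟨by linarith, by linarith⟩
  have hright := hsin (a := π / 2 - β) (b := π / 2 - α) ⟨by linarith, by linarith⟩
    ⟨by linarith, by linarith⟩
  have hsplit : Set.EqOn (fun φ => log (tan φ - tan δ))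
      (fun φ => log (2 * sin (φ - δ)) - log (2 * sin (π / 2 - φ)) - log (cos δ))
      (Set.uIcc α β) := by
    intro φ hφ
    rw [Set.uIcc_of_le hαβ] at hφ
    exact log_tan_sub_tan (cos_pos_of_mem_Ioo ⟨hδ, by linarith⟩).ne'
      (cos_pos_of_mem_Ioo ⟨by linarith [hφ.1], by linarith [hφ.2]⟩).ne'
      (sin_pos_of_pos_of_lt_pi (by linarith [hφ.1]) (by linarith [hφ.2])).ne'
  have hint₁ : IntervalIntegrable (fun φ => log (2 * sin (φ - δ))) volume α β := by
    simpa using (intervalIntegrable_log_two_mul_sin hleft).comp_sub_right δ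
  have hint₂ : IntervalIntegrable (fun φ => log (2 * sin (π / 2 - φ))) volume α β := by
    simpa using ((intervalIntegrable_log_two_mul_sin hright).comp_sub_left (π / 2)).symm
  rw [intervalIntegral.integral_congr hsplit, intervalIntegral.integral_sub (hint₁.sub hint₂)
    intervalIntegrable_const, intervalIntegral.integral_sub hint₁ hint₂,
    intervalIntegral.integral_const,
    intervalIntegral.integral_comp_sub_right (fun t => log (2 * sin t)),
    intervalIntegral.integral_comp_sub_left (fun t => log (2 * sin t)),
    integral_log_two_mul_sin hleft, integral_log_two_mul_sin hright]
  simp only [smul_eq_mul, mul_sub, mul_div_cancel₀ π two_ne_zero]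
  ring
end

section
/- Let α, β be real numbers with −π/2 < α ≤ β < π/2. Then ∫_α^β log(2·cos(φ)) dφ = (1/2)·( Cl₂(π − 2β) − Cl₂(π − 2α) ). -/
/-!
For `|r| < 1`, the real part of `-log (1 - r e^{it}) = ∑ (r e^{it})ⁿ / n` is
`-½ log (1 - 2 r cos t + r²) = ∑ rⁿ cos (n t) / n`, a uniformly convergent series which may be
integrated termwise: `∫ₓʸ log (1 - 2 r cos t + r²) dt = 2 (C(r, x) - C(r, y))` with the Abel means
`C(r, x) = ∑ rⁿ sin (n x) / n²` of the Clausen series. When `[x, y] ⊂ (0, 2π)` both sides are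
continuous in `r ∈ [0, 1]`: the left by dominated convergence, the integrand being continuous on a
compact set, the right by the Weierstrass M-test. At `r = 1` the integrand is `2 log (2 sin (t / 2))`,
and the theorem follows by the substitution `t = π - 2φ`.
-/

open Real

open Filter Set Topology intervalIntegral

noncomputable def Cl2Abel (r x : ℝ) : ℝ :=
  ∑' n : ℕ, r ^ (n + 1) * sin (((n : ℝ) + 1) * x) / ((n : ℝ) + 1) ^ 2

@[simp] lemma Cl2Abel_one (x : ℝ) : Cl2Abel 1 x = Cl2 x := by
  simp [Cl2Abel, Cl2]

lemma summable_one_div_nat_add_one_sq : Summable fun n : ℕ => 1 / ((n : ℝ) + 1) ^ 2 := by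
  exact_mod_cast (summable_nat_add_iff 1).mpr (summable_one_div_nat_pow.mpr one_lt_two)

lemma continuousOn_Cl2Abel (x : ℝ) : ContinuousOn (fun r => Cl2Abel r x) (Icc (-1) 1) := by
  refine continuousOn_tsum (fun n => by fun_prop) summable_one_div_nat_add_one_sq
    fun n r hr => ?_
  have hr' : |r| ≤ 1 := abs_le.mpr hr
  rw [norm_div, norm_mul, norm_pow, norm_pow, Real.norm_eq_abs, Real.norm_eq_abs,
    Real.norm_eq_abs, abs_of_pos (by positivity : (0 : ℝ) < n + 1)]
  gcongr
  calc |r| ^ (n + 1) * |sin ((n + 1) * x)| ≤ 1 * 1 := by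
        gcongr
        · exact pow_le_one₀ (abs_nonneg r) hr'
        · exact abs_sin_le_one _
    _ = 1 := one_mul 1

lemma hasSum_pow_mul_cos_div (r t : ℝ) (hr : |r| < 1) :
    HasSum (fun n : ℕ => r ^ (n + 1) * cos (((n : ℝ) + 1) * t) / ((n : ℝ) + 1))
      (-(log (1 - 2 * r * cos t + r ^ 2) / 2)) := by
  set z : ℂ := r * Complex.exp (t * Complex.I)
  have hz : ‖z‖ < 1 := by simpa [z, Complex.norm_exp] using hr
  have hterm (n : ℕ) : (z ^ (n + 1) / (n + 1)).re
      = r ^ (n + 1) * cos (((n : ℝ) + 1) * t) / ((n : ℝ) + 1) := by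
    have : z ^ (n + 1) / (n + 1) = ((r ^ (n + 1) / ((n : ℝ) + 1) : ℝ) : ℂ)
        * Complex.exp ((((n : ℝ) + 1) * t : ℝ) * Complex.I) := by
      simp only [z, mul_pow, ← Complex.exp_nat_mul]
      push_cast
      ring_nf
    rw [this, Complex.re_ofReal_mul, Complex.exp_ofReal_mul_I_re]
    ring
  have hnormSq : Complex.normSq (1 - z) = 1 - 2 * r * cos t + r ^ 2 := by
    rw [Complex.normSq_apply]
    simp only [z, Complex.sub_re, Complex.sub_im, Complex.one_re, Complex.one_im,
      Complex.re_ofReal_mul, Complex.im_ofReal_mul, Complex.exp_ofReal_mul_I_re,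
      Complex.exp_ofReal_mul_I_im]
    linear_combination r ^ 2 * sin_sq_add_cos_sq t
  have hlog : (-Complex.log (1 - z)).re = -(log (1 - 2 * r * cos t + r ^ 2) / 2) := by
    rw [Complex.neg_re, Complex.log_re, Complex.norm_def, hnormSq,
      log_sqrt (by rw [← hnormSq]; exact Complex.normSq_nonneg _)]
  simpa only [hterm, hlog] using Complex.hasSum_re (Complex.hasSum_taylorSeries_neg_log' hz)

lemma one_sub_two_mul_cos_add_sq_pos_of_abs_lt {r : ℝ} (hr : |r| < 1) (t : ℝ) :
    0 < 1 - 2 * r * cos t + r ^ 2 := by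
  have hrc : r * cos t ≤ |r| := by
    calc r * cos t ≤ |r * cos t| := le_abs_self _
      _ = |r| * |cos t| := abs_mul _ _
      _ ≤ |r| * 1 := by gcongr; exact abs_cos_le_one t
      _ = |r| := mul_one _
  nlinarith [sq_abs r, abs_nonneg r]

lemma one_sub_two_mul_cos_add_sq_pos_of_cos_lt_one {r t : ℝ} (hr : r ∈ Icc (0 : ℝ) 1)
    (ht : cos t < 1) : 0 < 1 - 2 * r * cos t + r ^ 2 := by
  rcases hr.1.eq_or_lt with rfl | hr0
  · norm_num
  · nlinarith [hr.2]

lemma hasDerivAt_Cl2Abel {r : ℝ} (hr : |r| < 1) (x : ℝ) :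
    HasDerivAt (Cl2Abel r) (-(log (1 - 2 * r * cos x + r ^ 2) / 2)) x := by
  have hderiv (n : ℕ) (y : ℝ) : HasDerivAt
      (fun y => r ^ (n + 1) * sin (((n : ℝ) + 1) * y) / ((n : ℝ) + 1) ^ 2)
      (r ^ (n + 1) * cos (((n : ℝ) + 1) * y) / ((n : ℝ) + 1)) y := by
    have h := (((hasDerivAt_id' y).const_mul ((n : ℝ) + 1)).sin.const_mul (r ^ (n + 1))).div_const
      (((n : ℝ) + 1) ^ 2)
    refine h.congr_deriv ?_
    field_simp
  have hbound (n : ℕ) (y : ℝ) :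
      ‖r ^ (n + 1) * cos (((n : ℝ) + 1) * y) / ((n : ℝ) + 1)‖ ≤ |r| ^ (n + 1) := by
    rw [norm_div, norm_mul, norm_pow, Real.norm_eq_abs, Real.norm_eq_abs, Real.norm_eq_abs,
      abs_of_pos (by positivity : (0 : ℝ) < n + 1)]
    calc |r| ^ (n + 1) * |cos ((n + 1) * y)| / (n + 1) ≤ |r| ^ (n + 1) * 1 / 1 := by
          gcongr
          · exact abs_cos_le_one _
          · linarith [n.cast_nonneg (α := ℝ)]
      _ = |r| ^ (n + 1) := by ring
  have hsum := hasDerivAt_tsum ((summable_geometric_of_lt_one (abs_nonneg r) hr).comp_injective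
    (add_left_injective 1)) hderiv hbound (y₀ := 0) (by simp) x
  rwa [(hasSum_pow_mul_cos_div r x hr).tsum_eq] at hsum

lemma integral_log_one_sub_two_mul_cos_add_sq {r : ℝ} (hr : |r| < 1) (x y : ℝ) :
    ∫ t in x..y, log (1 - 2 * r * cos t + r ^ 2) = 2 * (Cl2Abel r x - Cl2Abel r y) := by
  have hcont : Continuous fun t => log (1 - 2 * r * cos t + r ^ 2) :=
    (by fun_prop : Continuous fun t => 1 - 2 * r * cos t + r ^ 2).log
      fun t => (one_sub_two_mul_cos_add_sq_pos_of_abs_lt hr t).ne'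
  have hFTC := integral_eq_sub_of_hasDerivAt (fun t _ => hasDerivAt_Cl2Abel hr t)
    ((hcont.div_const 2).neg.intervalIntegrable x y)
  rw [intervalIntegral.integral_neg, intervalIntegral.integral_div] at hFTC
  linarith

lemma continuousWithinAt_integral_log_one_sub_two_mul_cos_add_sq {x y : ℝ}
    (hcos : ∀ t ∈ uIcc x y, cos t < 1) :
    ContinuousWithinAt (fun r => ∫ t in x..y, log (1 - 2 * r * cos t + r ^ 2)) (Icc 0 1) 1 := by
  have hpos : ∀ p ∈ Icc (0 : ℝ) 1 ×ˢ uIcc x y, 0 < 1 - 2 * p.1 * cos p.2 + p.1 ^ 2 :=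
    fun p hp => one_sub_two_mul_cos_add_sq_pos_of_cos_lt_one hp.1 (hcos p.2 hp.2)
  obtain ⟨C, hC⟩ := (isCompact_Icc.prod isCompact_uIcc).exists_bound_of_continuousOn
    ((by fun_prop : Continuous fun p : ℝ × ℝ => 1 - 2 * p.1 * cos p.2 + p.1 ^ 2).continuousOn.log
      fun p hp => (hpos p hp).ne')
  refine continuousWithinAt_of_dominated_interval (bound := fun _ => C)
    (Eventually.of_forall fun r => (by fun_prop : Measurable _).aestronglyMeasurable)
    (eventually_nhdsWithin_of_forall fun r hr => MeasureTheory.ae_of_all _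
      fun t ht => hC (r, t) ⟨hr, uIoc_subset_uIcc ht⟩)
    intervalIntegrable_const (MeasureTheory.ae_of_all _ fun t ht => ?_)
  have h1 : 0 < 1 - 2 * 1 * cos t + 1 ^ 2 :=
    hpos (1, t) ⟨right_mem_Icc.mpr zero_le_one, uIoc_subset_uIcc ht⟩
  exact ((by fun_prop : Continuous fun r => 1 - 2 * r * cos t + r ^ 2).continuousAt.log
    h1.ne').continuousWithinAt

lemma integral_log_two_mul_sin_half {x y : ℝ} (hx : x ∈ Ioo 0 (2 * π)) (hy : y ∈ Ioo 0 (2 * π)) :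
    ∫ t in x..y, log (2 * sin (t / 2)) = Cl2 x - Cl2 y := by
  have hxy : uIcc x y ⊆ Ioo 0 (2 * π) := ordConnected_Ioo.uIcc_subset hx hy
  have hsin : ∀ t ∈ uIcc x y, 0 < sin (t / 2) := fun t ht =>
    sin_pos_of_pos_of_lt_pi (by linarith [(hxy ht).1]) (by linarith [(hxy ht).2])
  have hsq (t : ℝ) : 1 - 2 * 1 * cos t + 1 ^ 2 = (2 * sin (t / 2)) ^ 2 := by
    have hcos2 : cos t = 2 * cos (t / 2) ^ 2 - 1 := by rw [← cos_two_mul]; ring_nf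
    rw [hcos2]
    linear_combination (-4 : ℝ) * sin_sq_add_cos_sq (t / 2)
  have hcos : ∀ t ∈ uIcc x y, cos t < 1 := fun t ht => by
    nlinarith [hsq t, hsin t ht]
  have hAbel : ∀ r ∈ Ico (0 : ℝ) 1, ∫ t in x..y, log (1 - 2 * r * cos t + r ^ 2)
      = 2 * (Cl2Abel r x - Cl2Abel r y) := fun r hr =>
    integral_log_one_sub_two_mul_cos_add_sq (abs_lt.mpr ⟨by linarith [hr.1], hr.2⟩) x y
  have hlim : ∫ t in x..y, log (1 - 2 * 1 * cos t + 1 ^ 2) = 2 * (Cl2Abel 1 x - Cl2Abel 1 y) := by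
    have hCl : ContinuousOn (fun r => 2 * (Cl2Abel r x - Cl2Abel r y)) (Icc (-1) 1) :=
      continuousOn_const.mul ((continuousOn_Cl2Abel x).sub (continuousOn_Cl2Abel y))
    refine tendsto_nhds_unique_of_eventuallyEq (l := 𝓝[<] (1 : ℝ))
      ((continuousWithinAt_integral_log_one_sub_two_mul_cos_add_sq hcos).mono_of_mem_nhdsWithin
        (Icc_mem_nhdsLT (by norm_num)))
      ((hCl.continuousWithinAt (by norm_num)).mono_of_mem_nhdsWithin
        (Icc_mem_nhdsLT (by norm_num)))
      ?_
    filter_upwards [Ico_mem_nhdsLT (by norm_num : (0 : ℝ) < 1)] with r hr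
    exact hAbel r hr
  simp only [Cl2Abel_one] at hlim
  rw [← mul_right_inj' (two_ne_zero (α := ℝ)), ← hlim, ← intervalIntegral.integral_const_mul]
  refine intervalIntegral.integral_congr fun t ht => ?_
  rw [hsq, log_pow]
  push_cast
  ring

theorem stmt7 (α β : ℝ) (hα : -(π / 2) < α) (hαβ : α ≤ β) (hβ : β < π / 2) :
    ∫ φ in α..β, Real.log (2 * Real.cos φ) =
      (1 / 2) * (Cl2 (π - 2 * β) - Cl2 (π - 2 * α)) := by
  have hcos (φ : ℝ) : cos φ = sin ((π - 2 * φ) / 2) := by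
    rw [← cos_pi_div_two_sub]; ring_nf
  simp_rw [hcos]
  rw [intervalIntegral.integral_comp_sub_mul (fun t => log (2 * sin (t / 2))) two_ne_zero,
    integral_log_two_mul_sin_half ⟨by linarith, by linarith⟩ ⟨by linarith, by linarith⟩,
    smul_eq_mul, one_div]
end
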